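/- Suppose for each time t ∈ ℕ₊ there exists t₀ ∈ [t, t + (T−1)M] (T, M ∈ ℕ₊ fixed) such that the horizon ending at t₀ + M is informative. Define m_k as the maximal number of pairwise disjoint informative horizons of length M contained in [0, k]. Then m_k ≥ ⌊k / (T·M + M)⌋ for all k; in particular m_k → ∞ as k → ∞ and m_k grows at least linearly in k. -/
import Mathlib


/-- Remark 1: if for each time `t ≥ 1` there is `t₀ ∈ [t, t + (T−1)M]` such that
the horizon of length `M` ending at `t₀ + M` (i.e. the interval
`[t₀, t₀ + M − 1]`) is informative, then for every `k` one can find at least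
`⌊k / (TM + M)⌋` pairwise disjoint informative horizons contained in `[0, k]`;
hence the informativity index `m_k` grows at least linearly in `k`. Here a
horizon ending at `τ` is the interval `[τ − M, τ − 1]`, and two such horizons
with ends `τ < τ'` are disjoint iff `τ ≤ τ' − M`. -/
theorem informativity_index_linear_growth (M T : ℕ) (hM : 0 < M) (hT : 0 < T)
    (Informative : ℕ → Prop)
    (hper : ∀ t : ℕ, 1 ≤ t →
      ∃ t₀, t ≤ t₀ ∧ t₀ ≤ t + (T - 1) * M ∧ Informative (t₀ + M)) :
    ∀ k : ℕ, ∃ S : Finset ℕ,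
      k / (T * M + M) ≤ S.card ∧
      (∀ τ ∈ S, Informative τ ∧ M ≤ τ ∧ τ ≤ k) ∧
      (∀ τ ∈ S, ∀ τ' ∈ S, τ < τ' → τ ≤ τ' - M) := by
  intro k
  set P := T * M + M with hP
  have hTM : (T - 1) * M + M = T * M := by
    obtain ⟨t, rfl⟩ := Nat.exists_eq_add_of_lt hT
    simp [Nat.succ_mul, Nat.add_mul]
  -- choose an informative end for each block
  have hch : ∀ i : ℕ, ∃ t₀, i * P + 1 ≤ t₀ ∧ t₀ ≤ i * P + 1 + (T - 1) * M ∧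
      Informative (t₀ + M) := fun i => hper (i * P + 1) (by omega)
  choose g hg1 hg2 hg3 using hch
  set f : ℕ → ℕ := fun i => g i + M with hf
  have hlo : ∀ i, i * P + 1 + M ≤ f i := fun i => by
    have := hg1 i; simp [hf]; omega
  have hhi : ∀ i, f i ≤ (i + 1) * P + 1 - M := fun i => by
    have := hg2 i
    have : f i ≤ i * P + 1 + (T - 1) * M + M := by simp [hf]; omega
    have h2 : i * P + 1 + (T - 1) * M + M = i * P + 1 + T * M := by omega
    have h3 : (i + 1) * P = i * P + P := by ring
    omega
  have hgap : ∀ i j, i < j → f i + M ≤ f j := by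
    intro i j hij
    have h1 := hhi i
    have h2 := hlo j
    have h3 : (i + 1) * P ≤ j * P := Nat.mul_le_mul_right _ (by omega)
    omega
  have hmono : StrictMono f := by
    intro i j hij
    have := hgap i j hij
    omega
  refine ⟨(Finset.range (k / P)).image f, ?_, ?_, ?_⟩
  · rw [Finset.card_image_of_injective _ hmono.injective, Finset.card_range]
  · intro τ hτ
    simp only [Finset.mem_image, Finset.mem_range] at hτ
    obtain ⟨i, hi, rfl⟩ := hτ
    refine ⟨hg3 i, by simp [hf], ?_⟩
    have h1 := hhi i
    have h2 : (i + 1) * P ≤ (k / P) * P := Nat.mul_le_mul_right _ (by omega)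
    have h3 : (k / P) * P ≤ k := Nat.div_mul_le_self k P
    omega
  · intro τ hτ τ' hτ' hlt
    simp only [Finset.mem_image, Finset.mem_range] at hτ hτ'
    obtain ⟨i, hi, rfl⟩ := hτ
    obtain ⟨j, hj, rfl⟩ := hτ'
    have hij : i < j := hmono.lt_iff_lt.mp hlt
    have := hgap i j hij
    omega
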